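/- Let s = 2N+1 be odd (N ≥ 1), 0 < ρ < 1, and ν the self-similar measure with equal weights for the IFS {τ_d(x)=(-1)^d ρ(x+d)}_{d=0}^{2N}. Then Z(ν̂) ⊆ ( ⋃_{k=1}^∞ ((2ℤ+1)\s(2ℤ+1))/(2ρ^k s) ) ∪ ( ⋃_{k=1}^∞ (ℤ\sℤ)/(ρ^k s) ). -/

import Mathlib

/-!
Write `ν̂ t = charFun ν (2π t)`. Self-similarity gives, with `c = charFun ν (ρ s)` and
`ζ = exp (i ρ s)`,
`(2N+1) charFun ν s = c ∑_{j ≤ N} ζ^{2j} + conj (c ζ ∑_{j < N} ζ^{2j})`,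
the odd digits contributing conjugates since `charFun ν (-x) = conj (charFun ν x)`.
As `charFun ν (ρⁿ s) → 1`, a zero `s` has some `n` with `charFun ν (ρⁿ s) = 0` but
`charFun ν (ρⁿ⁺¹ s) ≠ 0`. There the two geometric sums in `w = ζ²` have equal modulus, so
`|w^{N+1} - 1| = |w^N - 1|` on the unit circle, which forces `w ≠ 1` and `w^{2N+1} = 1`.
Hence `2(2N+1)ρⁿ⁺¹ t` is an integer not divisible by `2N+1`, and its parity decides which of
the two sets contains `t`.
-/

open MeasureTheory Complex Filter Finset
open scoped ENNReal
open scoped ComplexConjugate Real Topology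

section CharFun

variable {E : Type*} [MeasurableSpace E] [NormedAddCommGroup E] [InnerProductSpace ℝ E]

lemma charFun_smul_measure (c : ℝ≥0∞) (μ : Measure E) (t : E) :
    charFun (c • μ) t = c.toReal * charFun μ t := by
  simp [charFun_apply, integral_smul_measure]

lemma charFun_finsetSum_measure [OpensMeasurableSpace E] {ι : Type*} (s : Finset ι)
    (μ : ι → Measure E) [∀ i, IsFiniteMeasure (μ i)] (t : E) :
    charFun (∑ i ∈ s, μ i) t = ∑ i ∈ s, charFun (μ i) t := by
  simp only [charFun_eq_integral_innerProbChar]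
  exact integral_finsetSum_measure fun i _ ↦
    (BoundedContinuousFunction.innerProbChar t).integrable (μ i)

end CharFun

lemma charFun_map_mul_add (μ : Measure ℝ) (a b s : ℝ) :
    charFun (μ.map fun x ↦ a * (x + b)) s = charFun μ (a * s) * exp ((b * (a * s) : ℝ) * I) := by
  rw [charFun_map_mul_comp (by fun_prop), charFun_map_add_const]
  simp only [RCLike.inner_apply, conj_trivial, mul_comm b]

lemma charFun_eq_of_eq_smul_sum_map {ι : Type*} {S : Finset ι} {c : ℝ≥0∞} {a b : ι → ℝ}
    {ν : Measure ℝ} [IsFiniteMeasure ν]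
    (hν : ν = c • ∑ d ∈ S, ν.map fun x ↦ a d * (x + b d)) (s : ℝ) :
    charFun ν s = c.toReal * ∑ d ∈ S, charFun ν (a d * s) * exp ((b d * (a d * s) : ℝ) * I) := by
  conv_lhs => rw [hν]
  simp only [charFun_smul_measure, charFun_finsetSum_measure, charFun_map_mul_add]

lemma exists_charFun_pow_mul_ne_zero (μ : Measure ℝ) [IsProbabilityMeasure μ] {ρ : ℝ}
    (h0 : 0 ≤ ρ) (h1 : ρ < 1) (s : ℝ) : ∃ n : ℕ, charFun μ (ρ ^ n * s) ≠ 0 := by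
  have : Tendsto (fun n : ℕ ↦ charFun μ (ρ ^ n * s)) atTop (𝓝 1) := by
    have hρ : Tendsto (fun n : ℕ ↦ ρ ^ n * s) atTop (𝓝 0) := by
      simpa using (tendsto_pow_atTop_nhds_zero_of_lt_one h0 h1).mul_const s
    have := ((continuous_charFun (μ := μ)).tendsto 0).comp hρ
    rwa [charFun_zero, probReal_univ, ofReal_one] at this
  exact (this.eventually_ne one_ne_zero).exists

lemma Nat.exists_eq_zero_and_succ_ne_zero {M : Type*} [Zero M] {g : ℕ → M} (h0 : g 0 = 0)
    (h : ∃ n, g n ≠ 0) : ∃ n, g n = 0 ∧ g (n + 1) ≠ 0 := by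
  by_contra! hg
  obtain ⟨n, hn⟩ := h
  exact hn (Nat.rec h0 hg n)

lemma Finset.sum_range_two_mul_add_one {M : Type*} [AddCommMonoid M] (f : ℕ → M) (n : ℕ) :
    ∑ d ∈ range (2 * n + 1), f d
      = ∑ j ∈ range (n + 1), f (2 * j) + ∑ j ∈ range n, f (2 * j + 1) := by
  induction n with
  | zero => simp
  | succ n ih =>
    rw [show 2 * (n + 1) + 1 = 2 * n + 1 + 1 + 1 by ring, sum_range_succ, sum_range_succ, ih,
      sum_range_succ (fun j ↦ f (2 * j)) (n + 1), sum_range_succ (fun j ↦ f (2 * j + 1)) n,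
      show 2 * (n + 1) = 2 * n + 1 + 1 by ring]
    abel

lemma Complex.eq_or_eq_conj_of_norm_sub_one_eq {a b : ℂ} (ha : ‖a‖ = 1) (hb : ‖b‖ = 1)
    (h : ‖a - 1‖ = ‖b - 1‖) : a = b ∨ a = conj b := by
  have hsq : ∀ z : ℂ, ‖z - 1‖ ^ 2 = ‖z‖ ^ 2 - 2 * z.re + 1 := fun z ↦ by
    simp only [Complex.sq_norm, normSq_apply, sub_re, sub_im, one_re, one_im]; ring
  have hre : a.re = b.re := by
    have := congrArg (· ^ 2) h
    simp only [hsq, ha, hb] at this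
    linarith
  have him : a.im ^ 2 = b.im ^ 2 := by
    rw [← sq_norm_sub_sq_re, ← sq_norm_sub_sq_re, ha, hb, hre]
  rcases sq_eq_sq_iff_eq_or_eq_neg.mp him with him | him
  · exact .inl (Complex.ext hre him)
  · exact .inr (Complex.ext (by simpa using hre) (by simpa using him))

lemma ne_one_and_pow_eq_one_of_norm_geom_sum_eq {w : ℂ} (hw : ‖w‖ = 1) {n : ℕ}
    (h : ‖∑ j ∈ range (n + 1), w ^ j‖ = ‖∑ j ∈ range n, w ^ j‖) :
    w ≠ 1 ∧ w ^ (2 * n + 1) = 1 := by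
  have hw1 : w ≠ 1 := by
    rintro rfl
    simp only [one_pow, sum_const, card_range, nsmul_eq_mul, mul_one, norm_natCast] at h
    push_cast at h
    linarith
  have hpow : ‖w ^ (n + 1) - 1‖ = ‖w ^ n - 1‖ := by
    rw [← geom_sum_mul, ← geom_sum_mul, norm_mul, norm_mul, h]
  refine ⟨hw1, ?_⟩
  rcases Complex.eq_or_eq_conj_of_norm_sub_one_eq (by simp [hw]) (by simp [hw]) hpow with h' | h'
  · refine absurd ?_ hw1
    rw [pow_succ] at h'
    exact mul_left_cancel₀ (pow_ne_zero _ (by rintro rfl; simp at hw)) (h'.trans (mul_one _).symm)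
  · rw [show 2 * n + 1 = n + (n + 1) by ring, pow_add, h', mul_conj, normSq_eq_norm_sq,
      norm_pow, hw]
    simp

lemma exists_int_of_exp_pow_eq_one {M : ℕ} (hM : M ≠ 0) {θ : ℝ} (h1 : exp (θ * I) ≠ 1)
    (hM1 : exp (θ * I) ^ M = 1) : ∃ a : ℤ, ¬ (M : ℤ) ∣ a ∧ M * θ = 2 * π * a := by
  rw [← Complex.exp_nat_mul, Complex.exp_eq_one_iff] at hM1
  obtain ⟨a, ha⟩ := hM1
  have hθ : (M : ℝ) * θ = 2 * π * a := by
    have := congrArg Complex.im ha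
    simpa [mul_comm] using this
  refine ⟨a, ?_, hθ⟩
  rintro ⟨b, rfl⟩
  apply h1
  rw [Complex.exp_eq_one_iff]
  refine ⟨b, ?_⟩
  have : θ = b * (2 * π) := by
    have hM' : (M : ℝ) ≠ 0 := by exact_mod_cast hM
    apply mul_left_cancel₀ hM'
    push_cast at hθ
    linear_combination hθ
  rw [this]; push_cast; ring

lemma Complex.exp_ofReal_nat_mul_mul_I (n : ℕ) (x : ℝ) :
    exp ((n * x : ℝ) * I) = exp (x * I) ^ n := by
  rw [← exp_nat_mul]; push_cast; ring_nf

lemma Complex.exp_ofReal_neg_mul_I (x : ℝ) : exp ((-x : ℝ) * I) = conj (exp (x * I)) := by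
  rw [← exp_conj]; simp

lemma exists_int_of_charFun_eq_zero {N : ℕ} {ρ : ℝ} {ν : Measure ℝ} [IsFiniteMeasure ν]
    (hself : ν = (2 * N + 1 : ℝ≥0∞)⁻¹ • ∑ d ∈ range (2 * N + 1),
      ν.map fun x ↦ (-1) ^ d * ρ * (x + d)) {s : ℝ}
    (hs : charFun ν s = 0) (hρs : charFun ν (ρ * s) ≠ 0) :
    ∃ a : ℤ, ¬ (2 * N + 1 : ℤ) ∣ a ∧ (2 * N + 1 : ℕ) * (2 * (ρ * s)) = 2 * π * a := by
  set c := charFun ν (ρ * s)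
  set ζ := exp ((ρ * s : ℝ) * I)
  have heven : ∀ j : ℕ, charFun ν ((-1) ^ (2 * j) * ρ * s)
      * exp (((2 * j : ℕ) * ((-1) ^ (2 * j) * ρ * s) : ℝ) * I) = c * (ζ ^ 2) ^ j := fun j ↦ by
    rw [(even_two_mul j).neg_one_pow, one_mul, exp_ofReal_nat_mul_mul_I, pow_mul]
  have hodd : ∀ j : ℕ, charFun ν ((-1) ^ (2 * j + 1) * ρ * s)
      * exp (((2 * j + 1 : ℕ) * ((-1) ^ (2 * j + 1) * ρ * s) : ℝ) * I)
        = conj (c * ζ * (ζ ^ 2) ^ j) := fun j ↦ by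
    rw [(odd_two_mul_add_one j).neg_one_pow, exp_ofReal_nat_mul_mul_I, neg_one_mul,
      neg_mul, charFun_neg, exp_ofReal_neg_mul_I, ← map_pow, ← map_mul, pow_succ', pow_mul,
      mul_assoc]
  have hsum : c * ∑ j ∈ range (N + 1), (ζ ^ 2) ^ j
      + conj (c * ζ * ∑ j ∈ range N, (ζ ^ 2) ^ j) = 0 := by
    have h := charFun_eq_of_eq_smul_sum_map (a := fun d ↦ (-1) ^ d * ρ) (b := fun d : ℕ ↦ (d : ℝ))
      hself s
    simp only [hs, sum_range_two_mul_add_one, heven, hodd] at h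
    have hr : (((2 * N + 1 : ℝ≥0∞)⁻¹).toReal : ℂ) ≠ 0 := by
      simpa using ENNReal.toReal_ne_zero.mpr ⟨by positivity, by finiteness⟩
    rw [mul_sum, mul_sum, map_sum]
    exact (mul_eq_zero.mp h.symm).resolve_left hr
  have hζ : ‖ζ‖ = 1 := norm_exp_ofReal_mul_I _
  have hnorm : ‖∑ j ∈ range (N + 1), (ζ ^ 2) ^ j‖ = ‖∑ j ∈ range N, (ζ ^ 2) ^ j‖ := by
    have := congrArg norm (eq_neg_of_add_eq_zero_left hsum)
    rw [norm_mul, norm_neg, Complex.norm_conj, norm_mul, norm_mul, hζ, mul_one] at this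
    exact mul_left_cancel₀ (norm_ne_zero_iff.mpr hρs) this
  obtain ⟨hw1, hw⟩ :=
    ne_one_and_pow_eq_one_of_norm_geom_sum_eq (by rw [norm_pow, hζ, one_pow]) hnorm
  have hζ2 : ζ ^ 2 = exp ((2 * (ρ * s) : ℝ) * I) := by
    rw [← exp_ofReal_nat_mul_mul_I]; norm_num
  rw [hζ2] at hw1 hw
  obtain ⟨a, ha, h⟩ := exists_int_of_exp_pow_eq_one (by omega) hw1 hw
  exact ⟨a, by exact_mod_cast ha, h⟩

lemma eq_odd_div_or_eq_int_div {N k : ℕ} (hk : 1 ≤ k) {ρ t : ℝ} (hρ : ρ ≠ 0) {a : ℤ}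
    (ha : ¬ (2 * N + 1 : ℤ) ∣ a) (h : 2 * ρ ^ k * (2 * N + 1) * t = a) :
    (∃ k : ℕ, 1 ≤ k ∧ ∃ a : ℤ, Odd a ∧ (¬ ∃ b : ℤ, Odd b ∧ a = (2 * N + 1 : ℤ) * b) ∧
        t = (a : ℝ) / (2 * ρ ^ k * (2 * N + 1))) ∨
      (∃ k : ℕ, 1 ≤ k ∧ ∃ a : ℤ, ¬ ((2 * N + 1 : ℤ) ∣ a) ∧
        t = (a : ℝ) / (ρ ^ k * (2 * N + 1))) := by
  have hρk : ρ ^ k * (2 * N + 1) ≠ 0 := mul_ne_zero (pow_ne_zero k hρ) (by positivity)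
  rcases Int.even_or_odd' a with ⟨b, rfl | rfl⟩
  · refine .inr ⟨k, hk, b, fun hb ↦ ha (dvd_mul_of_dvd_right hb 2), ?_⟩
    rw [eq_div_iff hρk]
    push_cast at h
    linarith
  · refine .inl ⟨k, hk, 2 * b + 1, odd_two_mul_add_one b, fun ⟨c, _, hc⟩ ↦ ha ⟨c, hc⟩, ?_⟩
    rw [eq_div_iff (by rw [mul_assoc]; exact mul_ne_zero two_ne_zero hρk)]
    linarith

theorem ft_zero_set_subset_general (N : ℕ) (ρ : ℝ) (hρ : ρ ∈ Set.Ioo (0 : ℝ) 1)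
    (ν : Measure ℝ) [IsProbabilityMeasure ν]
    (hself : ν = (2 * N + 1 : ℝ≥0∞)⁻¹ • ∑ d ∈ Finset.range (2 * N + 1),
      Measure.map (fun x : ℝ => (-1 : ℝ) ^ d * ρ * (x + (d : ℝ))) ν) :
    ∀ t : ℝ, (∫ x, Complex.exp (2 * (Real.pi : ℂ) * Complex.I * (t : ℂ) * (x : ℂ)) ∂ν) = 0 →
      (∃ k : ℕ, 1 ≤ k ∧ ∃ a : ℤ, Odd a ∧ (¬ ∃ b : ℤ, Odd b ∧ a = (2 * N + 1 : ℤ) * b) ∧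
        t = (a : ℝ) / (2 * ρ ^ k * (2 * N + 1))) ∨
      (∃ k : ℕ, 1 ≤ k ∧ ∃ a : ℤ, ¬ ((2 * N + 1 : ℤ) ∣ a) ∧
        t = (a : ℝ) / (ρ ^ k * (2 * N + 1))) := by
  intro t ht
  have hzero : charFun ν (ρ ^ 0 * (2 * π * t)) = 0 := by
    rw [charFun_apply_real, ← ht]
    congr 1 with x
    push_cast
    ring_nf
  obtain ⟨m, hm, hm1⟩ := Nat.exists_eq_zero_and_succ_ne_zero
    (g := fun n ↦ charFun ν (ρ ^ n * (2 * π * t))) hzero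
    (exists_charFun_pow_mul_ne_zero ν hρ.1.le hρ.2 _)
  obtain ⟨a, ha, h⟩ := exists_int_of_charFun_eq_zero hself hm (by rwa [← mul_assoc, ← pow_succ'])
  refine eq_odd_div_or_eq_int_div (Nat.le_add_left 1 m) hρ.1.ne' ha
    (mul_left_cancel₀ Real.two_pi_pos.ne' ?_)
  rw [← h]
  push_cast
  ring

/-- for odd `s = 2N+1` (`N ≥ 1`), `0 < ρ < 1`, and the self-similar measure
`ν` of the IFS `{τ_d(x)=(-1)^d ρ(x+d)}_{d=0}^{2N}` with equal weights, the zero set of `ν̂`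
is contained in
`(⋃_{k≥1} ((2ℤ+1)∖s(2ℤ+1))/(2ρ^k s)) ∪ (⋃_{k≥1} (ℤ∖sℤ)/(ρ^k s))`. -/
theorem ft_zero_set_subset (N : ℕ) (hN : 1 ≤ N) (ρ : ℝ) (hρ : ρ ∈ Set.Ioo (0 : ℝ) 1)
    (ν : Measure ℝ) [IsProbabilityMeasure ν]
    (hself : ν = (2 * N + 1 : ℝ≥0∞)⁻¹ • ∑ d ∈ Finset.range (2 * N + 1),
      Measure.map (fun x : ℝ => (-1 : ℝ) ^ d * ρ * (x + (d : ℝ))) ν) :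
    ∀ t : ℝ, (∫ x, Complex.exp (2 * (Real.pi : ℂ) * Complex.I * (t : ℂ) * (x : ℂ)) ∂ν) = 0 →
      (∃ k : ℕ, 1 ≤ k ∧ ∃ a : ℤ, Odd a ∧ (¬ ∃ b : ℤ, Odd b ∧ a = (2 * N + 1 : ℤ) * b) ∧
        t = (a : ℝ) / (2 * ρ ^ k * (2 * N + 1))) ∨
      (∃ k : ℕ, 1 ≤ k ∧ ∃ a : ℤ, ¬ ((2 * N + 1 : ℤ) ∣ a) ∧
        t = (a : ℝ) / (ρ ^ k * (2 * N + 1))) :=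
  ft_zero_set_subset_general N ρ hρ ν hself
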